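/- Let p be a prime, let R be a commutative ring of characteristic p, let m > 0, and let ∂ = (∂_n)_{0 ≤ n < p^m} be an m-truncated HS-derivation on R. Then for every i < m, every j ∈ ℕ, and all x, y ∈ R: ∂_{p^i}^{(j)}(x·y^{p^i}) = Σ_{l=0}^{j} binom(j, l)·∂_{p^i}^{(j−l)}(x)·(∂_1^{(l)}(y))^{p^i}. -/

import Mathlib

/-!
Package `∂` as the truncated series `∑_{n < p ^ m} ∂_n x X ^ n`, which is multiplicative in `x`
up to degree `p ^ m`. In characteristic `p`, the series of `y ^ p ^ i` is then the Frobenius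
twist of the series of `y` with `X` replaced by `X ^ p ^ i`, so `∂_b (y ^ p ^ i)` vanishes for
`0 < b < p ^ i` and `∂_{p ^ i} (y ^ p ^ i) = (∂_1 y) ^ p ^ i`. Hence
`∂_{p ^ i} (u * v ^ p ^ i) = ∂_{p ^ i} u * v ^ p ^ i + u * (∂_1 v) ^ p ^ i`: on the products
`∂_{p ^ i}^{(a)} x * (∂_1^{(b)} y) ^ p ^ i` the map `∂_{p ^ i}` acts as the sum of the two index
shifts `a ↦ a + 1` and `b ↦ b + 1`, and iterating it gives the binomial formula.
-/

open Finset Function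

/-- `D` is an `m`-truncated HS-derivation on `R` (for the prime `p`):
only the maps `D n` for `n < p ^ m` are relevant. -/
def IsTruncHSDeriv (p m : ℕ) {R : Type*} [CommRing R] (D : ℕ → R → R) : Prop :=
  (∀ n, n < p ^ m → ∀ x y, D n (x + y) = D n x + D n y) ∧
  (∀ x, D 0 x = x) ∧
  (∀ n, n < p ^ m → ∀ x y, D n (x * y) = ∑ ij ∈ Finset.HasAntidiagonal.antidiagonal n, D ij.1 x * D ij.2 y)

open Polynomial

theorem AddMonoidHom.iterate_apply_eq_sum_choose_nsmul {M : Type*} [AddCommMonoid M]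
    (f : M →+ M) (F : ℕ → ℕ → M) (hF : ∀ a b, f (F a b) = F (a + 1) b + F a (b + 1)) (n : ℕ) :
    f^[n] (F 0 0) = ∑ l ∈ Finset.range (n + 1), n.choose l • F (n - l) l := by
  induction n with
  | zero => simp
  | succ n ih =>
    have hshift : ∀ l ∈ Finset.range (n + 1), F (n - l + 1) l = F (n + 1 - l) l := fun l hl => by
      rw [Nat.sub_add_comm (Nat.lt_succ_iff.mp (Finset.mem_range.mp hl))]
    rw [iterate_succ_apply', ih, map_sum, sum_choose_succ_nsmul (fun l k => F k l)]
    simp only [map_nsmul, hF, smul_add, sum_add_distrib]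
    rw [sum_congr rfl fun l hl => by rw [hshift l hl]]

namespace IsTruncHSDeriv

variable {p m : ℕ} {R : Type*} [CommRing R] {D : ℕ → R → R}

theorem map_add (hD : IsTruncHSDeriv p m D) {n : ℕ} (hn : n < p ^ m) (x y : R) :
    D n (x + y) = D n x + D n y :=
  hD.1 n hn x y

theorem apply_zero (hD : IsTruncHSDeriv p m D) (x : R) : D 0 x = x :=
  hD.2.1 x

theorem apply_mul (hD : IsTruncHSDeriv p m D) {n : ℕ} (hn : n < p ^ m) (x y : R) :
    D n (x * y) = ∑ ij ∈ antidiagonal n, D ij.1 x * D ij.2 y :=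
  hD.2.2 n hn x y

variable (p m D) in
noncomputable def series (x : R) : R[X] :=
  ∑ n ∈ range (p ^ m), C (D n x) * X ^ n

theorem coeff_series_of_lt {x : R} {n : ℕ} (hn : n < p ^ m) :
    (series p m D x).coeff n = D n x := by
  simp [series, coeff_C_mul, coeff_X_pow, hn]

theorem coeff_mul_of_lt (hD : IsTruncHSDeriv p m D) {f g : R[X]} {u v : R}
    (hf : ∀ n < p ^ m, f.coeff n = D n u) (hg : ∀ n < p ^ m, g.coeff n = D n v)
    {n : ℕ} (hn : n < p ^ m) : (f * g).coeff n = D n (u * v) := by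
  rw [coeff_mul, hD.apply_mul hn]
  refine sum_congr rfl fun ij hij => ?_
  have hsum : ij.1 + ij.2 = n := mem_antidiagonal.mp hij
  rw [hf ij.1 (by omega), hg ij.2 (by omega)]

theorem coeff_series_pow_of_lt (hD : IsTruncHSDeriv p m D) (x : R) {k : ℕ} (hk : k ≠ 0)
    {n : ℕ} (hn : n < p ^ m) : (series p m D x ^ k).coeff n = D n (x ^ k) := by
  obtain ⟨k, rfl⟩ := Nat.exists_eq_add_one_of_ne_zero hk
  clear hk
  induction k generalizing n with
  | zero => simpa using coeff_series_of_lt hn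
  | succ k ih =>
    rw [pow_succ (series p m D x), pow_succ x]
    exact hD.coeff_mul_of_lt (fun n hn => ih hn) (fun n hn => coeff_series_of_lt hn) hn

/-- Below degree `p ^ m`, `series (x ^ p ^ i)` agrees with `(series x) ^ p ^ i`, which in
characteristic `p` is the Frobenius twist of `series x` with `X` replaced by `X ^ p ^ i`. -/
theorem apply_pow_expChar_pow [ExpChar R p] (hD : IsTruncHSDeriv p m D) (x : R) (i : ℕ)
    {n : ℕ} (hn : n < p ^ m) :
    D n (x ^ p ^ i) = if p ^ i ∣ n then D (n / p ^ i) x ^ p ^ i else 0 := by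
  have hpi : 0 < p ^ i := expChar_pow_pos R p i
  rw [← hD.coeff_series_pow_of_lt x hpi.ne' hn, ← map_iterateFrobenius_expand, coeff_map,
    coeff_expand hpi]
  split_ifs
  · rw [coeff_series_of_lt (lt_of_le_of_lt (Nat.div_le_self n _) hn), iterateFrobenius_def]
  · exact map_zero _

/-- Only the terms `(p ^ i, 0)` and `(0, p ^ i)` of the Leibniz sum survive. -/
theorem apply_mul_pow_expChar_pow [ExpChar R p] (hD : IsTruncHSDeriv p m D) {i : ℕ}
    (hi : p ^ i < p ^ m) (u v : R) :
    D (p ^ i) (u * v ^ p ^ i) = D (p ^ i) u * v ^ p ^ i + u * D 1 v ^ p ^ i := by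
  have hpi : 0 < p ^ i := expChar_pow_pos R p i
  rw [hD.apply_mul hi, sum_eq_add (p ^ i, 0) (0, p ^ i) fun h => hpi.ne' (congrArg Prod.fst h)]
  · rw [hD.apply_zero, hD.apply_zero, hD.apply_pow_expChar_pow v i hi, if_pos dvd_rfl,
      Nat.div_self hpi]
  · rintro ⟨a, b⟩ hab ⟨hab₁, hab₂⟩
    have hsum : a + b = p ^ i := mem_antidiagonal.mp hab
    have hb : b < p ^ i :=
      lt_of_le_of_ne (by omega) fun h => hab₂ (Prod.ext (by dsimp; omega) h)
    have hb₀ : b ≠ 0 := fun h => hab₁ (Prod.ext (by dsimp; omega) h)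
    rw [hD.apply_pow_expChar_pow v i (hb.trans hi),
      if_neg fun hdvd => hb₀ (Nat.eq_zero_of_dvd_of_lt hdvd hb), mul_zero]
  · simp
  · simp

end IsTruncHSDeriv

theorem iterate_leibniz_p_pow_general (p : ℕ) (hp : p.Prime) (m : ℕ)
    (R : Type*) [CommRing R] [CharP R p]
    (D : ℕ → R → R)
    (hD : IsTruncHSDeriv p m D)
    (i : ℕ) (hi : i < m) (j : ℕ) (x y : R) :
    (D (p ^ i))^[j] (x * y ^ p ^ i) =
      ∑ l ∈ Finset.range (j + 1),
        j.choose l • ((D (p ^ i))^[j - l] x * ((D 1)^[l] y) ^ p ^ i) := by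
  have : ExpChar R p := ExpChar.prime hp
  have hlt : p ^ i < p ^ m := Nat.pow_lt_pow_right hp.one_lt hi
  have key := (AddMonoidHom.mk' (D (p ^ i)) (hD.map_add hlt)).iterate_apply_eq_sum_choose_nsmul
    (fun a b => (D (p ^ i))^[a] x * ((D 1)^[b] y) ^ p ^ i)
    (fun a b => by simp only [AddMonoidHom.mk'_apply, hD.apply_mul_pow_expChar_pow hlt,
      iterate_succ_apply']) j
  simpa only [AddMonoidHom.mk'_apply, iterate_zero, id_eq] using key

/-- For an `m`-truncated HS-derivation, a Leibniz-type rule for iterates of `D (p^i)`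
applied to `x * y^{p^i}`. -/
theorem iterate_leibniz_p_pow (p : ℕ) (hp : p.Prime) (m : ℕ) (hm : 0 < m)
    (R : Type*) [CommRing R] [CharP R p]
    (D : ℕ → R → R)
    (hD : IsTruncHSDeriv p m D)
    (i : ℕ) (hi : i < m) (j : ℕ) (x y : R) :
    (D (p ^ i))^[j] (x * y ^ p ^ i) =
      ∑ l ∈ Finset.range (j + 1),
        j.choose l • ((D (p ^ i))^[j - l] x * ((D 1)^[l] y) ^ p ^ i) :=
  iterate_leibniz_p_pow_general p hp m R D hD i hi j x y
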